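/- For every b > 0, the quantity g(b) := −arctan(b) − log(b + √(1+b²))/√(1+b²) + (2/b)·log(1+b²) is negative. -/

import Mathlib

/-!
Write `s = √(1 + x²)` and `arsinh x = log (x + s)`. Multiplying the quantity by `b > 0` gives
`F b = -b arctan b - b arsinh b / s + 2 log (1 + b²)`, which vanishes at `0`. Differentiating
three times peels off positive factors: `(1 + x²) F' = H` and `H' = x K`, where `H` and `K`
also vanish at `0`, and `K' = -3x² / s⁴ - 3x arsinh x / s⁵ < 0` for `x > 0`. Hence `K`, `H`
and `F` are successively negative on `(0, ∞)`.
-/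

open Real Set

lemma lt_zero_of_hasDerivAt_neg {f f' : ℝ → ℝ} (hf : ∀ x, HasDerivAt f (f' x) x)
    (hf0 : f 0 = 0) (hf' : ∀ x, 0 < x → f' x < 0) {x : ℝ} (hx : 0 < x) : f x < 0 := by
  have hanti : StrictAntiOn f (Ici 0) :=
    strictAntiOn_of_deriv_neg (convex_Ici 0) (fun y _ => (hf y).continuousAt.continuousWithinAt)
      fun y hy => by
        rw [interior_Ici] at hy
        rw [(hf y).deriv]
        exact hf' y hy
  simpa [hf0] using hanti self_mem_Ici hx.le hx

lemma hasDerivAt_one_add_sq (x : ℝ) : HasDerivAt (fun y : ℝ => 1 + y ^ 2) (2 * x) x := by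
  simpa using (hasDerivAt_pow 2 x).const_add 1

lemma hasDerivAt_sqrt_one_add_sq (x : ℝ) :
    HasDerivAt (fun y : ℝ => √(1 + y ^ 2)) (x / √(1 + x ^ 2)) x := by
  refine ((hasDerivAt_sqrt (by positivity)).comp x (hasDerivAt_one_add_sq x)).congr_deriv ?_
  ring

namespace ArctanArsinh

noncomputable def K (x : ℝ) : ℝ :=
  -2 * arctan x + x / (1 + x ^ 2) + arsinh x / √(1 + x ^ 2) ^ 3

noncomputable def H (x : ℝ) : ℝ :=
  -((1 + x ^ 2) * arctan x) + 2 * x - arsinh x / √(1 + x ^ 2)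

noncomputable def F (x : ℝ) : ℝ :=
  -(x * arctan x) - x * arsinh x / √(1 + x ^ 2) + 2 * log (1 + x ^ 2)

lemma hasDerivAt_K (x : ℝ) :
    HasDerivAt K (-(3 * x ^ 2) / √(1 + x ^ 2) ^ 4 - 3 * x * arsinh x / √(1 + x ^ 2) ^ 5) x := by
  have h0 : (0 : ℝ) < 1 + x ^ 2 := by positivity
  have hK : HasDerivAt K _ x :=
    (((hasDerivAt_arctan x).const_mul (-2)).add ((hasDerivAt_id' x).div (hasDerivAt_one_add_sq x)
      h0.ne')).add
      ((hasDerivAt_arsinh x).div ((hasDerivAt_sqrt_one_add_sq x).fun_pow 3) (by positivity))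
  convert hK using 1
  set s := √(1 + x ^ 2)
  have hs0 : 0 < s := sqrt_pos.2 h0
  have hs2 : s ^ 2 = 1 + x ^ 2 := sq_sqrt h0.le
  clear_value s
  rw [← hs2]
  field_simp
  linear_combination s ^ 3 * hs2

lemma K_neg {x : ℝ} (hx : 0 < x) : K x < 0 := by
  refine lt_zero_of_hasDerivAt_neg hasDerivAt_K (by simp [K]) (fun y hy => ?_) hx
  have : 0 < 3 * y * arsinh y / √(1 + y ^ 2) ^ 5 := by
    have := arsinh_pos_iff.2 hy
    positivity
  have : 0 < 3 * y ^ 2 / √(1 + y ^ 2) ^ 4 := by positivity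
  rw [neg_div]
  linarith

lemma hasDerivAt_H (x : ℝ) : HasDerivAt H (x * K x) x := by
  have h0 : (0 : ℝ) < 1 + x ^ 2 := by positivity
  have hH : HasDerivAt H _ x :=
    (((hasDerivAt_one_add_sq x).mul (hasDerivAt_arctan x)).neg.add
      ((hasDerivAt_id' x).const_mul 2)).sub
      ((hasDerivAt_arsinh x).div (hasDerivAt_sqrt_one_add_sq x) (sqrt_pos.2 h0).ne')
  convert hH using 1
  rw [K]
  set s := √(1 + x ^ 2)
  have hs0 : 0 < s := sqrt_pos.2 h0
  have hs2 : s ^ 2 = 1 + x ^ 2 := sq_sqrt h0.le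
  clear_value s
  rw [← hs2]
  field_simp
  linear_combination (-s) * hs2

lemma H_neg {x : ℝ} (hx : 0 < x) : H x < 0 :=
  lt_zero_of_hasDerivAt_neg hasDerivAt_H (by simp [H])
    (fun _ hy => mul_neg_of_pos_of_neg hy (K_neg hy)) hx

lemma hasDerivAt_F (x : ℝ) : HasDerivAt F (H x / (1 + x ^ 2)) x := by
  have h0 : (0 : ℝ) < 1 + x ^ 2 := by positivity
  have hF : HasDerivAt F _ x := (((hasDerivAt_id' x).mul (hasDerivAt_arctan x)).neg.sub
    (((hasDerivAt_id' x).fun_mul (hasDerivAt_arsinh x)).div (hasDerivAt_sqrt_one_add_sq x)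
      (sqrt_pos.2 h0).ne')).add (((hasDerivAt_one_add_sq x).log h0.ne').const_mul 2)
  convert hF using 1
  rw [H]
  set s := √(1 + x ^ 2)
  have hs0 : 0 < s := sqrt_pos.2 h0
  have hs2 : s ^ 2 = 1 + x ^ 2 := sq_sqrt h0.le
  clear_value s
  rw [← hs2]
  field_simp
  linear_combination arsinh x * hs2

lemma F_neg {x : ℝ} (hx : 0 < x) : F x < 0 :=
  lt_zero_of_hasDerivAt_neg hasDerivAt_F (by simp [F])
    (fun y hy => div_neg_of_neg_of_pos (H_neg hy) (by positivity)) hx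

end ArctanArsinh

theorem stmt_16 (b : ℝ) (hb : 0 < b) :
    -Real.arctan b - Real.log (b + Real.sqrt (1 + b^2)) / Real.sqrt (1 + b^2)
      + (2/b) * Real.log (1 + b^2) < 0 := by
  have hF : -Real.arctan b - Real.log (b + Real.sqrt (1 + b^2)) / Real.sqrt (1 + b^2)
      + (2/b) * Real.log (1 + b^2) = ArctanArsinh.F b / b := by
    rw [← arsinh, ArctanArsinh.F]
    field_simp
  rw [hF]
  exact div_neg_of_neg_of_pos (ArctanArsinh.F_neg hb) hb
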